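/- arXiv:2511.12358 — 2 statements merged into one kernel-verified Lean document; each statement's English description precedes it below -/
import Mathlib

section
/- For every sequence u over a finite alphabet and every n ∈ ℕ, r_u(n+2) ≥ r_u(n). -/
namespace ReflPaper

variable {A : Type*}

/-- The factor of `u` of length `n` at position `i`: `u(i) u(i+1) ⋯ u(i+n-1)`. -/
def factorAt (u : ℕ → A) (n i : ℕ) : List A :=
  (List.range n).map (fun k => u (i + k))

/-- The word `w` occurs in the sequence `u` at position `i`. -/
def OccursAt (u : ℕ → A) (w : List A) (i : ℕ) : Prop :=
  w = factorAt u w.length i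

/-- The language of `u`: the set of all factors of `u`. -/
def Lang (u : ℕ → A) : Set (List A) := {w | ∃ i, OccursAt u w i}

/-- The set of factors of `u` of length `n`. -/
def LangN (u : ℕ → A) (n : ℕ) : Set (List A) := {w | w.length = n ∧ w ∈ Lang u}

/-- The word `w` occurs infinitely many times in `u`. -/
def OccursInf (u : ℕ → A) (w : List A) : Prop := {i | OccursAt u w i}.Infinite

/-- `u` is eventually periodic. -/
def EventuallyPeriodic (u : ℕ → A) : Prop :=
  ∃ N p : ℕ, 1 ≤ p ∧ ∀ i, N ≤ i → u (i + p) = u i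

/-- Two words are reflectively equivalent if one equals the other or its reversal. -/
def ReflEquiv (w v : List A) : Prop := w = v ∨ w = v.reverse

/-- Reflective equivalence as a setoid on words. -/
def reflSetoid (A : Type*) : Setoid (List A) where
  r := ReflEquiv
  iseqv := by
    constructor
    · intro w; exact Or.inl rfl
    · intro w v h
      rcases h with h | h
      · exact Or.inl h.symm
      · subst h; simp [ReflEquiv]
    · intro w v x h1 h2
      rcases h1 with h1 | h1 <;> rcases h2 with h2 | h2 <;> subst h1 <;>
        simp [ReflEquiv, h2]

/-- The number of reflective-equivalence classes of words in a set `S`. -/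
noncomputable def nClasses (S : Set (List A)) : ℕ :=
  Set.ncard (Quotient.mk (reflSetoid A) '' S)

/-- The reflection complexity `r_u(n)`. -/
noncomputable def reflComplexity (u : ℕ → A) (n : ℕ) : ℕ := nClasses (LangN u n)

/-- The factor complexity `C_u(n) = #L_n(u)`. -/
noncomputable def factorComplexity (u : ℕ → A) (n : ℕ) : ℕ := (LangN u n).ncard

/-- The palindromic complexity `P_u(n)`. -/
noncomputable def palComplexity (u : ℕ → A) (n : ℕ) : ℕ :=
  Set.ncard {w ∈ LangN u n | w.reverse = w}

/-- Both-sided extensions of `w` in the language of `u`. -/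
def Bext (u : ℕ → A) (w : List A) : Set (List A) :=
  {x ∈ Lang u | ∃ a b : A, x = a :: (w ++ [b])}

/-- Right extensions of `w` in the language of `u`. -/
def Rext (u : ℕ → A) (w : List A) : Set (List A) :=
  {x ∈ Lang u | ∃ a : A, x = w ++ [a]}

/-- `T(w)`: the number of reflective-equivalence classes of `Bext(w) ∪ Bext(w̄)`. -/
noncomputable def TT (u : ℕ → A) (w : List A) : ℕ :=
  nClasses (Bext u w ∪ Bext u w.reverse)

/-- `w` is a right special factor of `u`. -/
def RightSpecial (u : ℕ → A) (w : List A) : Prop :=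
  ∃ a b : A, a ≠ b ∧ w ++ [a] ∈ Lang u ∧ w ++ [b] ∈ Lang u

/-- `w` is a left special factor of `u`. -/
def LeftSpecial (u : ℕ → A) (w : List A) : Prop :=
  ∃ a b : A, a ≠ b ∧ a :: w ∈ Lang u ∧ b :: w ∈ Lang u

/-- `u` is Sturmian: `C_u(n) = n + 1` for all `n`. -/
def Sturmian (u : ℕ → A) : Prop := ∀ n, factorComplexity u n = n + 1

/-- `u` is quasi-Sturmian: `C_u(n) = n + c` eventually. -/
def QuasiSturmian (u : ℕ → A) : Prop :=
  ∃ n₀ c : ℕ, ∀ n, n₀ ≤ n → factorComplexity u n = n + c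


/-- `r_u(n+2) ≥ r_u(n)` for every `n`. -/
lemma reflEquiv_refl (a : List A) : ReflEquiv a a := Or.inl rfl
lemma reflEquiv_symm {a b : List A} (h : ReflEquiv a b) : ReflEquiv b a := (reflSetoid A).iseqv.symm h

lemma length_factorAt (u : ℕ → A) (k i : ℕ) : (factorAt u k i).length = k := by
  simp [factorAt]

lemma factorAt_add (u : ℕ → A) (a b i : ℕ) :
    factorAt u (a + b) i = factorAt u a i ++ factorAt u b (i + a) := by
  simp only [factorAt, List.range_add, List.map_append, List.map_map]
  congr 1
  apply List.map_congr_left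
  intro x _
  simp only [Function.comp]
  congr 1
  omega

lemma mem_LangN {u : ℕ → A} {k : ℕ} {w : List A} :
    w ∈ LangN u k ↔ ∃ i, w = factorAt u k i := by
  constructor
  · rintro ⟨hl, i, h⟩
    rw [OccursAt, hl] at h
    exact ⟨i, h⟩
  · rintro ⟨i, rfl⟩
    exact ⟨length_factorAt u k i, i, by rw [OccursAt, length_factorAt]⟩

def mid (l : List A) : List A := l.tail.dropLast

lemma dropLast_tail (l : List A) : l.tail.dropLast = l.dropLast.tail := by
  rcases l with _ | ⟨a, l⟩
  · simp
  rcases l with _ | ⟨b, l⟩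
  · simp
  simp

lemma dropLast_rev (l : List A) : l.reverse.dropLast = l.tail.reverse := by
  have h := List.tail_reverse (l := l.reverse)
  rw [List.reverse_reverse] at h
  rw [h, List.reverse_reverse]

lemma mid_reverse (l : List A) : mid l.reverse = (mid l).reverse := by
  unfold mid
  rw [List.tail_reverse, dropLast_rev, dropLast_tail]

lemma mid_factorAt (u : ℕ → A) (n k : ℕ) :
    mid (factorAt u (n + 2) k) = factorAt u n (k + 1) := by
  have e : n + 2 = 1 + (n + 1) := by omega
  rw [e, factorAt_add]
  have e2 : n + 1 = n + 1 := rfl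
  rw [factorAt_add u n 1 (k + 1)]
  unfold mid
  have h1 : factorAt u 1 k = [u k] := by simp [factorAt, List.range_succ]
  have h2 : factorAt u 1 (k + 1 + n) = [u (k + 1 + n)] := by simp [factorAt, List.range_succ]
  rw [h1, h2]
  simp

lemma take_factorAt (u : ℕ → A) (n k : ℕ) :
    (factorAt u (n + 2) k).take n = factorAt u n k := by
  rw [factorAt_add u n 2 k]
  exact List.take_left' (length_factorAt u n k)

lemma take_reverse_factorAt (u : ℕ → A) (n k : ℕ) :
    (factorAt u (n + 2) k).reverse.take n = (factorAt u n (k + 2)).reverse := by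
  rw [show n + 2 = 2 + n by omega, factorAt_add u 2 n k, List.reverse_append]
  exact List.take_left' (by simp [length_factorAt])

theorem stmt1 {A : Type*} [Fintype A] (u : ℕ → A) (n : ℕ) :
    reflComplexity u n ≤ reflComplexity u (n + 2) := by
  classical
  unfold reflComplexity nClasses
  set Q : List A → Quotient (reflSetoid A) := Quotient.mk (reflSetoid A) with hQ
  set m : ℕ → List A := fun i => factorAt u n i with hm
  set V : ℕ → List A := fun k => factorAt u (n + 2) k with hV
  set S2 : Set (Quotient (reflSetoid A)) := Q '' LangN u (n + 2) with hS2
  have hresp : ∀ a b : List A, (reflSetoid A).r a b → Q (mid a) = Q (mid b) := by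
    intro a b hab
    rcases hab with rfl | rfl
    · rfl
    · exact Quotient.sound (Or.inr (mid_reverse b))
  set F : Quotient (reflSetoid A) → Quotient (reflSetoid A) :=
    Quotient.lift (fun l => Q (mid l)) hresp with hF
  have hS2fin : S2.Finite := by
    apply Set.Finite.image
    apply (List.finite_length_eq A (n + 2)).subset
    intro w hw
    exact hw.1
  have hmem2 : ∀ k, Q (V k) ∈ S2 := by
    intro k
    exact ⟨V k, mem_LangN.2 ⟨k, rfl⟩, rfl⟩
  have hFQ : ∀ k, F (Q (V k)) = Q (m (k + 1)) := by
    intro k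
    show Quotient.lift (fun l => Q (mid l)) hresp (Quotient.mk (reflSetoid A) (V k)) = _
    rw [Quotient.lift_mk]
    rw [hV]
    simp only []
    rw [mid_factorAt]
  by_cases hex : ∀ i, ∃ j, 1 ≤ j ∧ ReflEquiv (m j) (m i)
  · have hsub : Q '' LangN u n ⊆ F '' S2 := by
      rintro x ⟨w, hw, rfl⟩
      obtain ⟨i, rfl⟩ := mem_LangN.1 hw
      obtain ⟨j, hj1, hj⟩ := hex i
      refine ⟨Q (V (j - 1)), hmem2 _, ?_⟩
      rw [hFQ, show j - 1 + 1 = j by omega]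
      exact Quotient.sound hj
    calc (Q '' LangN u n).ncard ≤ (F '' S2).ncard :=
          Set.ncard_le_ncard hsub (hS2fin.image F)
      _ ≤ S2.ncard := Set.ncard_image_le hS2fin
  · push_neg at hex
    obtain ⟨i0, hi0⟩ := hex
    have hi00 : i0 = 0 := by
      by_contra h
      exact hi0 i0 (by omega) (reflEquiv_refl _)
    subst hi00
    -- pigeonhole
    obtain ⟨a, b, hab, hfab⟩ :=
      Finite.exists_ne_map_eq_of_infinite (fun i : ℕ => (fun k : Fin n => u (i + 1 + ↑k)))
    have hm_eq : m (a + 1) = m (b + 1) := by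
      simp only [hm, factorAt]
      apply List.map_congr_left
      intro k hk
      exact congrFun hfab ⟨k, List.mem_range.1 hk⟩
    have hbase : ∃ s t, 1 ≤ s ∧ s < t ∧ ReflEquiv (m s) (m t) := by
      rcases lt_trichotomy a b with h | h | h
      · exact ⟨a + 1, b + 1, by omega, by omega, Or.inl hm_eq⟩
      · exact absurd h hab
      · exact ⟨b + 1, a + 1, by omega, by omega, Or.inl hm_eq.symm⟩
    obtain ⟨s, t, hs, hst, hmst⟩ := hbase
    have hnoninj : ∃ i j, 1 ≤ i ∧ 1 ≤ j ∧ ReflEquiv (m i) (m j) ∧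
        ¬ ReflEquiv (V (i - 1)) (V (j - 1)) := by
      by_contra hcon
      push_neg at hcon
      have hstep : ∀ i j, 1 ≤ i → 1 ≤ j → ReflEquiv (m i) (m j) →
          (ReflEquiv (m (i - 1)) (m (j - 1)) ∨ ReflEquiv (m (i - 1)) (m (j + 1))) := by
        intro i j hi hj h
        rcases hcon i j hi hj h with he | he
        · left
          left
          have h2 := congrArg (List.take n) he
          simp only [hV] at h2
          rw [take_factorAt, take_factorAt] at h2
          exact h2
        · right
          right
          have h2 := congrArg (List.take n) he
          simp only [hV] at h2
          rw [take_factorAt, take_reverse_factorAt, show j - 1 + 2 = j + 1 by omega] at h2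
          exact h2
      have hdes : ∀ i, ∀ j, i < j → ReflEquiv (m i) (m j) →
          ∃ l, 1 ≤ l ∧ ReflEquiv (m 0) (m l) := by
        intro i
        induction i with
        | zero => intro j hj h; exact ⟨j, hj, h⟩
        | succ i ih =>
          intro j hj h
          rcases hstep (i + 1) j (by omega) (by omega) h with h' | h'
          · exact ih (j - 1) (by omega) (by simpa using h')
          · exact ih (j + 1) (by omega) (by simpa using h')
      obtain ⟨l, hl, h0l⟩ := hdes s t hst hmst
      exact hi0 l hl (reflEquiv_symm h0l)
    obtain ⟨i, j, hi, hj, hmij, hVij⟩ := hnoninj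
    have hxy : Q (V (i - 1)) ≠ Q (V (j - 1)) := fun h => hVij (Quotient.exact h)
    have hFxy : F (Q (V (i - 1))) = F (Q (V (j - 1))) := by
      rw [hFQ, hFQ, show i - 1 + 1 = i by omega, show j - 1 + 1 = j by omega]
      exact Quotient.sound hmij
    have himg : F '' S2 ⊆ F '' (S2 \ {Q (V (i - 1))}) := by
      rintro x ⟨z, hz, rfl⟩
      by_cases hzx : z = Q (V (i - 1))
      · subst hzx
        refine ⟨Q (V (j - 1)), ⟨hmem2 _, ?_⟩, hFxy.symm⟩
        simp only [Set.mem_singleton_iff]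
        exact fun hc => hxy hc.symm
      · exact ⟨z, ⟨hz, hzx⟩, rfl⟩
    have hsub : Q '' LangN u n ⊆ F '' S2 ∪ {Q (m 0)} := by
      rintro x ⟨w, hw, rfl⟩
      obtain ⟨k, rfl⟩ := mem_LangN.1 hw
      rcases Nat.eq_zero_or_pos k with hk | hk
      · subst hk
        right
        rfl
      · left
        refine ⟨Q (V (k - 1)), hmem2 _, ?_⟩
        rw [hFQ, show k - 1 + 1 = k by omega]
    have hfin1 : (F '' S2 ∪ {Q (m 0)}).Finite :=
      (hS2fin.image F).union (Set.finite_singleton _)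
    calc (Q '' LangN u n).ncard ≤ (F '' S2 ∪ {Q (m 0)}).ncard :=
          Set.ncard_le_ncard hsub hfin1
      _ ≤ (F '' S2).ncard + 1 := by
          simpa using Set.ncard_union_le (F '' S2) {Q (m 0)}
      _ ≤ (S2 \ {Q (V (i - 1))}).ncard + 1 := by
          have h1 : (F '' S2).ncard ≤ (F '' (S2 \ {Q (V (i - 1))})).ncard :=
            Set.ncard_le_ncard himg ((hS2fin.diff (t := _)).image F)
          have h2 : (F '' (S2 \ {Q (V (i - 1))})).ncard ≤ (S2 \ {Q (V (i - 1))}).ncard :=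
            Set.ncard_image_le (hS2fin.diff (t := _))
          omega
      _ = S2.ncard := Set.ncard_diff_singleton_add_one (hmem2 (i - 1)) hS2fin


end ReflPaper
end

section
/- Let u be a sequence over a finite alphabet, w a word, and c, e letters. Suppose wc is a left special factor of u and ew' is a right special factor of u, where w' = w or w' = w̄ (i.e., w' is reflectively equivalent to w). If T(w) = 2, then w' = w̄, e = c, and there exist two distinct letters a, b such that Bext(w) ∪ Bext(w̄) = {awc, bwc, cw̄a, cw̄b}. -/
/-!
The left extensions `awc` and `bwc` of `wc` are not reflectively equivalent, so `T(w) = 2` forces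
every both-sided extension of `w` or `w̄` to be one of `awc, bwc, cw̄a, cw̄b`. The right extensions
`ew'x` and `ew'y` cannot both end in `c`, hence `ew' = cw̄`, and matching last letters gives
`{x, y} = {a, b}`: so `cw̄a` and `cw̄b` are factors as well.
-/

namespace ReflPaper

variable {A : Type*}

theorem Setoid.rel_or_rel_of_ncard_image_mk_eq_two {α : Type*} (s : Setoid α) {S : Set α}
    {x y z : α} (hx : x ∈ S) (hy : y ∈ S) (hxy : ¬ s x y)
    (hS : (Quotient.mk s '' S).ncard = 2) (hz : z ∈ S) : s z x ∨ s z y := by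
  have hne : Quotient.mk s x ≠ Quotient.mk s y := fun h => hxy (Quotient.exact h)
  have himage : Quotient.mk s '' S = {Quotient.mk s x, Quotient.mk s y} :=
    (Set.eq_of_subset_of_ncard_le (Set.pair_subset (Set.mem_image_of_mem _ hx)
      (Set.mem_image_of_mem _ hy)) (by rw [hS, Set.ncard_pair hne])
      (Set.finite_of_ncard_ne_zero (by omega))).symm
  have hzmem := himage ▸ Set.mem_image_of_mem (Quotient.mk s) hz
  rcases hzmem with h | h
  exacts [.inl (Quotient.exact h), .inr (Quotient.exact h)]

theorem cons_append_singleton_inj_iff {v v' : List A} {e e' t t' : A} :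
    e :: (v ++ [t]) = e' :: (v' ++ [t']) ↔ e = e' ∧ v = v' ∧ t = t' := by
  simp

theorem reflEquiv_cons_append_iff {z w : List A} {a c : A} :
    ReflEquiv z (a :: (w ++ [c])) ↔ z = a :: (w ++ [c]) ∨ z = c :: (w.reverse ++ [a]) := by
  simp [ReflEquiv]

theorem not_reflEquiv_of_ne {w : List A} {a b c : A} (hab : a ≠ b) :
    ¬ ReflEquiv (a :: (w ++ [c])) (b :: (w ++ [c])) := by
  rw [reflEquiv_cons_append_iff, cons_append_singleton_inj_iff, cons_append_singleton_inj_iff]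
  grind

theorem cons_append_mem_iff {v w : List A} {e t a b c : A} :
    e :: (v ++ [t]) ∈ ({a :: (w ++ [c]), b :: (w ++ [c]),
        c :: (w.reverse ++ [a]), c :: (w.reverse ++ [b])} : Set (List A)) ↔
      (e = a ∨ e = b) ∧ v = w ∧ t = c ∨ e = c ∧ v = w.reverse ∧ (t = a ∨ t = b) := by
  simp only [Set.mem_insert_iff, Set.mem_singleton_iff, cons_append_singleton_inj_iff]
  tauto

theorem bext_union_subset_of_TT_eq_two {u : ℕ → A} {w : List A} {a b c : A} (hab : a ≠ b)
    (ha : a :: (w ++ [c]) ∈ Lang u) (hb : b :: (w ++ [c]) ∈ Lang u) (hT : TT u w = 2) :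
    Bext u w ∪ Bext u w.reverse ⊆ {a :: (w ++ [c]), b :: (w ++ [c]),
      c :: (w.reverse ++ [a]), c :: (w.reverse ++ [b])} := by
  intro z hz
  have hz' := Setoid.rel_or_rel_of_ncard_image_mk_eq_two (reflSetoid A)
    (Or.inl ⟨ha, a, c, rfl⟩) (Or.inl ⟨hb, b, c, rfl⟩) (not_reflEquiv_of_ne hab) hT hz
  change ReflEquiv _ _ ∨ ReflEquiv _ _ at hz'
  rw [reflEquiv_cons_append_iff, reflEquiv_cons_append_iff] at hz'
  simp only [Set.mem_insert_iff, Set.mem_singleton_iff]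
  tauto

theorem quad_subset_bext_union {u : ℕ → A} {w : List A} {a b c : A}
    (ha : a :: (w ++ [c]) ∈ Lang u) (hb : b :: (w ++ [c]) ∈ Lang u)
    (ha' : c :: (w.reverse ++ [a]) ∈ Lang u) (hb' : c :: (w.reverse ++ [b]) ∈ Lang u) :
    {a :: (w ++ [c]), b :: (w ++ [c]), c :: (w.reverse ++ [a]), c :: (w.reverse ++ [b])} ⊆
      Bext u w ∪ Bext u w.reverse := by
  rintro z (rfl | rfl | rfl | rfl)
  exacts [.inl ⟨ha, a, c, rfl⟩, .inl ⟨hb, b, c, rfl⟩, .inr ⟨ha', c, a, rfl⟩,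
    .inr ⟨hb', c, b, rfl⟩]

theorem cons_append_mem_bext_union {u : ℕ → A} {w v : List A} {e t : A}
    (hv : v = w ∨ v = w.reverse) (h : e :: v ++ [t] ∈ Lang u) :
    e :: (v ++ [t]) ∈ Bext u w ∪ Bext u w.reverse := by
  rcases hv with rfl | rfl
  exacts [.inl ⟨h, e, t, rfl⟩, .inr ⟨h, e, t, rfl⟩]

theorem eq_reverse_of_cons_append_mem_quad {v w : List A} {a b c e x y : A} (hxy : x ≠ y)
    (hx : e :: (v ++ [x]) ∈ ({a :: (w ++ [c]), b :: (w ++ [c]),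
        c :: (w.reverse ++ [a]), c :: (w.reverse ++ [b])} : Set (List A)))
    (hy : e :: (v ++ [y]) ∈ ({a :: (w ++ [c]), b :: (w ++ [c]),
        c :: (w.reverse ++ [a]), c :: (w.reverse ++ [b])} : Set (List A))) :
    v = w.reverse ∧ e = c ∧ (x = a ∧ y = b ∨ x = b ∧ y = a) := by
  rw [cons_append_mem_iff] at hx hy
  grind

theorem stmt11_general {A : Type*} (u : ℕ → A) (w w' : List A) (c e : A)
    (hL : LeftSpecial u (w ++ [c]))
    (hw' : w' = w ∨ w' = w.reverse)
    (hR : RightSpecial u (e :: w'))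
    (hT : TT u w = 2) :
    w' = w.reverse ∧ e = c ∧ ∃ a b : A, a ≠ b ∧
      Bext u w ∪ Bext u w.reverse =
        {a :: (w ++ [c]), b :: (w ++ [c]),
         c :: (w.reverse ++ [a]), c :: (w.reverse ++ [b])} := by
  obtain ⟨a, b, hab, ha, hb⟩ := hL
  obtain ⟨x, y, hxy, hx, hy⟩ := hR
  have hsub := bext_union_subset_of_TT_eq_two hab ha hb hT
  obtain ⟨rfl, rfl, hxy'⟩ := eq_reverse_of_cons_append_mem_quad hxy
    (hsub (cons_append_mem_bext_union hw' hx)) (hsub (cons_append_mem_bext_union hw' hy))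
  refine ⟨rfl, rfl, a, b, hab, hsub.antisymm ?_⟩
  rcases hxy' with ⟨rfl, rfl⟩ | ⟨rfl, rfl⟩
  exacts [quad_subset_bext_union ha hb hx hy, quad_subset_bext_union ha hb hy hx]

/-- if `wc` is left special, `ew'` is right special with `w'` reflectively
equivalent to `w`, and `T(w) = 2`, then `w' = w̄`, `e = c` and
`Bext(w) ∪ Bext(w̄) = {awc, bwc, cw̄a, cw̄b}` for some distinct letters `a, b`. -/
theorem stmt11 {A : Type*} [Fintype A] (u : ℕ → A) (w w' : List A) (c e : A)
    (hL : LeftSpecial u (w ++ [c]))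
    (hw' : w' = w ∨ w' = w.reverse)
    (hR : RightSpecial u (e :: w'))
    (hT : TT u w = 2) :
    w' = w.reverse ∧ e = c ∧ ∃ a b : A, a ≠ b ∧
      Bext u w ∪ Bext u w.reverse =
        {a :: (w ++ [c]), b :: (w ++ [c]),
         c :: (w.reverse ++ [a]), c :: (w.reverse ++ [b])} :=
  stmt11_general u w w' c e hL hw' hR hT

end ReflPaper
end
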